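/- arXiv:2001.09915 — 3 statements merged into one kernel-verified Lean document; each statement's English description precedes it below -/
import Mathlib

section
/- Let r > 0 and let (λ_k) be a sequence of complex numbers with Σ_{k≥1} |λ_k - k²|²/k² ≤ r². Then for each k there exists κ_k ∈ ℂ with λ_k = (k + κ_k)² and |κ_k| ≤ r. -/
/-- Key step: if `w ^ 2 = lam`, `Re w ≥ 0`, `k ≥ 1`, and `|lam - k²| ≤ r k`,
then `κ = w - k` works. -/
lemma aux_sqrt_bound (r : ℝ) (k : ℕ) (hk : 1 ≤ k) (lam : ℂ) (w : ℂ)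
    (hw : w ^ 2 = lam) (hre : 0 ≤ w.re)
    (hbd : ‖lam - (k : ℂ) ^ 2‖ ≤ r * k) :
    ∃ κ : ℂ, lam = ((k : ℂ) + κ) ^ 2 ∧ ‖κ‖ ≤ r := by
  refine ⟨w - k, by rw [← hw]; ring, ?_⟩
  have hk' : (1 : ℝ) ≤ (k : ℝ) := by exact_mod_cast hk
  have hkpos : (0 : ℝ) < k := lt_of_lt_of_le one_pos hk'
  have habs : ‖w + k‖ ≥ (k : ℝ) := by
    calc (k : ℝ) ≤ (w + k).re := by
          simp only [Complex.add_re, Complex.natCast_re]; linarith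
      _ ≤ ‖w + k‖ := Complex.re_le_norm _
  have hmul : ‖w - k‖ * ‖w + k‖ ≤ r * k := by
    rw [← norm_mul]
    have : (w - k) * (w + k) = lam - (k : ℂ) ^ 2 := by rw [← hw]; ring
    rw [this]; exact hbd
  have hrpos : 0 ≤ r := by
    by_contra h
    push_neg at h
    have : r * k < 0 := mul_neg_of_neg_of_pos h hkpos
    have := (norm_nonneg _).trans hbd
    linarith
  have habs' : (0 : ℝ) < ‖w + k‖ := lt_of_lt_of_le hkpos habs
  have : ‖w - k‖ * ‖w + k‖ ≤ r * ‖w + k‖ :=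
    hmul.trans (by nlinarith)
  exact le_of_mul_le_mul_right this habs'

theorem stmt_1 (r : ℝ) (hr : 0 < r) (lam : ℕ → ℂ)
    (hsum : Summable (fun n : ℕ =>
      ‖lam (n + 1) - ((n : ℂ) + 1) ^ 2‖ ^ 2 / ((n : ℝ) + 1) ^ 2))
    (hle : (∑' n : ℕ,
      ‖lam (n + 1) - ((n : ℂ) + 1) ^ 2‖ ^ 2 / ((n : ℝ) + 1) ^ 2) ≤ r ^ 2) :
    ∀ k : ℕ, 1 ≤ k → ∃ κ : ℂ, lam k = ((k : ℂ) + κ) ^ 2 ∧ ‖κ‖ ≤ r := by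
  intro k hk
  obtain ⟨n, rfl⟩ : ∃ n : ℕ, k = n + 1 := ⟨k - 1, by omega⟩
  -- the single term is ≤ the sum
  have hterm : (‖lam (n + 1) - ((n : ℂ) + 1) ^ 2‖) ^ 2 / ((n : ℝ) + 1) ^ 2
      ≤ r ^ 2 := by
    refine le_trans ?_ hle
    exact Summable.le_tsum hsum n (fun m _ => div_nonneg (sq_nonneg _) (sq_nonneg _))
  have hnpos : (0 : ℝ) < (n : ℝ) + 1 := by positivity
  have hbd : ‖lam (n + 1) - ((n : ℂ) + 1) ^ 2‖ ≤ r * ((n : ℝ) + 1) := by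
    have h1 : (‖lam (n + 1) - ((n : ℂ) + 1) ^ 2‖) ^ 2
        ≤ (r * ((n : ℝ) + 1)) ^ 2 := by
      rw [div_le_iff₀ (by positivity)] at hterm
      calc (‖lam (n + 1) - ((n : ℂ) + 1) ^ 2‖) ^ 2
          ≤ r ^ 2 * ((n : ℝ) + 1) ^ 2 := hterm
        _ = (r * ((n : ℝ) + 1)) ^ 2 := by ring
    nlinarith [norm_nonneg (lam (n + 1) - ((n : ℂ) + 1) ^ 2), h1,
      mul_pos hr hnpos]
  obtain ⟨w, hw⟩ : ∃ w : ℂ, w ^ 2 = lam (n + 1) :=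
    IsAlgClosed.exists_pow_nat_eq (lam (n + 1)) two_pos
  have hcast : ((n + 1 : ℕ) : ℂ) = (n : ℂ) + 1 := by push_cast; ring
  have hcast' : ((n + 1 : ℕ) : ℝ) = (n : ℝ) + 1 := by push_cast; ring
  rcases le_or_gt 0 w.re with hre | hre
  · have := aux_sqrt_bound r (n + 1) (by omega) (lam (n + 1)) w hw hre
      (by rw [hcast, hcast']; exact hbd)
    simpa [hcast] using this
  · have := aux_sqrt_bound r (n + 1) (by omega) (lam (n + 1)) (-w)
      (by rw [← hw]; ring) (by simp; linarith) (by rw [hcast, hcast']; exact hbd)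
    simpa [hcast] using this
end

section
/- Let N, Ñ ∈ L²-type weighted space on (0,π), i.e., (π-x)N(x) and (π-x)Ñ(x) are in L²(0,π) with ‖(π-·)N‖_{L²} ≤ r and ‖(π-·)Ñ‖_{L²} ≤ r. Define M(x) = 2N(x) - ∫_0^x (N*N)(t) dt and M̃(x) = 2Ñ(x) - ∫_0^x (Ñ*Ñ)(t) dt, where (f*g)(x) = ∫_0^x f(x-t)g(t) dt. Then ‖(π-·)(M - M̃)‖_{L²(0,π)} ≤ (2 + 2r√π)·‖(π-·)(N - Ñ)‖_{L²(0,π)}. -/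
/-!
Write `D = N - Ñ` and `‖f‖ = ‖(π - ·) f‖_{L²(0,π)}`. Bilinearity gives
`N * N - Ñ * Ñ = D * N + Ñ * D`, so it suffices to bound `(π - x) |∫₀ˣ (f * g)|` for `x < π`.
By Fubini, `∫₀ˣ (f * g) = ∫ g(s) K_f(x - s) ds` with `K_f(y) = ∫₀^y |f|`, and `π - x ≤ π - s`
on the range of integration, so this is dominated by the convolution of `(π - s) |g(s)|` with
`K_f`. Young's inequality `L² * L¹ → L²` bounds its `L²` norm by `‖g‖ ‖K_f‖_{L¹(0,π)}`, and
`‖K_f‖_{L¹(0,π)} = ∫₀^π (π - u) |f(u)| du ≤ √π ‖f‖` by Cauchy–Schwarz. Altogether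
`‖M - M̃‖ ≤ 2 ‖D‖ + √π (‖N‖ + ‖Ñ‖) ‖D‖`.
-/

open Real MeasureTheory Set Function
open scoped ENNReal Convolution

variable {𝕜 : Type*} [RCLike 𝕜]

lemma sq_lintegral_mul_le {α : Type*} [MeasurableSpace α] {ν : Measure α} {f w : α → ℝ≥0∞}
    (hf : AEMeasurable f ν) (hw : AEMeasurable w ν) :
    (∫⁻ a, f a * w a ∂ν) ^ 2 ≤ (∫⁻ a, w a ∂ν) * ∫⁻ a, f a ^ 2 * w a ∂ν := by
  have holder := ENNReal.lintegral_mul_norm_pow_le hw ((hf.pow_const 2).mul hw)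
    (p := 2⁻¹) (q := 2⁻¹) (by norm_num) (by norm_num) (by norm_num)
  have hsqrt : ∀ a, w a ^ (2⁻¹ : ℝ) * (f a ^ 2 * w a) ^ (2⁻¹ : ℝ) = f a * w a := fun a => by
    rw [← ENNReal.mul_rpow_of_nonneg _ _ (by norm_num),
      show w a * (f a ^ 2 * w a) = (f a * w a) ^ 2 by ring]
    exact_mod_cast ENNReal.pow_rpow_inv_natCast two_ne_zero _
  simp only [Pi.mul_apply, hsqrt] at holder
  calc (∫⁻ a, f a * w a ∂ν) ^ 2
      ≤ ((∫⁻ a, w a ∂ν) ^ (2⁻¹ : ℝ) * (∫⁻ a, f a ^ 2 * w a ∂ν) ^ (2⁻¹ : ℝ)) ^ 2 := by gcongr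
    _ = (∫⁻ a, w a ∂ν) * ∫⁻ a, f a ^ 2 * w a ∂ν := by
      rw [mul_pow]
      congr 1 <;> exact_mod_cast ENNReal.rpow_inv_natCast_pow two_ne_zero _

section L2

variable {α : Type*} [MeasurableSpace α] {μ : Measure α}

lemma sq_eLpNorm_two {ε : Type*} [ENorm ε] (f : α → ε) :
    eLpNorm f 2 μ ^ 2 = ∫⁻ a, ‖f a‖ₑ ^ 2 ∂μ := by
  simpa [ENNReal.rpow_two] using
    eLpNorm_nnreal_pow_eq_lintegral (f := f) (μ := μ) (p := 2) two_ne_zero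

variable {g : α → ℝ}

lemma sqrt_integral_sq_eq_toReal_eLpNorm (hg : AEStronglyMeasurable (fun x => g x ^ 2) μ) :
    √(∫ x, g x ^ 2 ∂μ) = (eLpNorm g 2 μ).toReal := by
  have hsq : ∀ x, ENNReal.ofReal (g x ^ 2) = ‖g x‖ₑ ^ 2 := fun x => by
    rw [Real.enorm_eq_ofReal_abs, ← ENNReal.ofReal_pow (abs_nonneg _), sq_abs]
  rw [integral_eq_lintegral_of_nonneg_ae (ae_of_all _ fun x => sq_nonneg _) hg]
  simp_rw [hsq]
  rw [← sq_eLpNorm_two, ENNReal.toReal_pow, Real.sqrt_sq ENNReal.toReal_nonneg]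

lemma sqrt_integral_sq_le_toReal_eLpNorm (g : α → ℝ) :
    √(∫ x, g x ^ 2 ∂μ) ≤ (eLpNorm g 2 μ).toReal := by
  by_cases hg : AEStronglyMeasurable (fun x => g x ^ 2) μ
  · exact (sqrt_integral_sq_eq_toReal_eLpNorm hg).le
  · rw [integral_non_aestronglyMeasurable hg, Real.sqrt_zero]
    exact ENNReal.toReal_nonneg

lemma eLpNorm_eq_ofReal_sqrt_integral_sq (hg : Integrable (fun x => g x ^ 2) μ) :
    eLpNorm g 2 μ = ENNReal.ofReal √(∫ x, g x ^ 2 ∂μ) := by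
  have hfin : eLpNorm g 2 μ ^ 2 ≠ ⊤ := by
    rw [sq_eLpNorm_two]
    simpa [enorm_pow] using hg.2.ne
  rw [sqrt_integral_sq_eq_toReal_eLpNorm hg.1, ENNReal.ofReal_toReal (by simpa using hfin)]

end L2

section Group

variable {G : Type*} [MeasurableSpace G] [AddCommGroup G] [MeasurableAdd₂ G] [MeasurableNeg G]
  {μ : Measure G} [μ.IsAddLeftInvariant] [μ.IsNegInvariant]

lemma enorm_convolution_self_sub_le {f g : G → 𝕜} (hf : AEStronglyMeasurable f μ)
    (hg : AEStronglyMeasurable g μ) {t : G}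
    (hff : ConvolutionExistsAt f f t (ContinuousLinearMap.mul 𝕜 𝕜) μ)
    (hgg : ConvolutionExistsAt g g t (ContinuousLinearMap.mul 𝕜 𝕜) μ) :
    ‖(f ⋆[ContinuousLinearMap.mul 𝕜 𝕜, μ] f) t - (g ⋆[ContinuousLinearMap.mul 𝕜 𝕜, μ] g) t‖ₑ
      ≤ ((‖(f - g) ·‖ₑ) ⋆ₗ[μ] (‖f ·‖ₑ)) t + ((‖g ·‖ₑ) ⋆ₗ[μ] (‖(f - g) ·‖ₑ)) t := by
  have hfirst : AEMeasurable (fun s => ‖(f - g) s‖ₑ * ‖f (t - s)‖ₑ) μ :=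
    (hf.sub hg).enorm.mul <| hf.enorm.comp_quasiMeasurePreserving
      (Measure.measurePreserving_sub_left μ t).quasiMeasurePreserving
  rw [convolution_def, convolution_def, ← integral_sub hff hgg, lconvolution_def,
    lconvolution_def]
  simp_rw [neg_add_eq_sub]
  rw [← lintegral_add_left' hfirst]
  refine (enorm_integral_le_lintegral_enorm _).trans (lintegral_mono fun s => ?_)
  have hbilin : f s * f (t - s) - g s * g (t - s)
      = (f - g) s * f (t - s) + g s * (f - g) (t - s) := by simp only [Pi.sub_apply]; ring
  simp only [ContinuousLinearMap.mul_apply', hbilin, ← enorm_mul]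
  exact enorm_add_le _ _

variable [SFinite μ]

theorem eLpNorm_lconvolution_le {g k : G → ℝ≥0∞} (hg : AEMeasurable g μ) (hk : AEMeasurable k μ) :
    eLpNorm (g ⋆ₗ[μ] k) 2 μ ≤ eLpNorm g 2 μ * ∫⁻ x, k x ∂μ := by
  have hconv : ∀ x, (g ⋆ₗ[μ] k) x = ∫⁻ y, g y * k (x - y) ∂μ := fun x => by
    simp_rw [lconvolution_def, neg_add_eq_sub]
  have hprod : AEMeasurable (fun p : G × G => g p.2 ^ 2 * k (p.1 - p.2)) (μ.prod μ) :=
    (hg.pow_const 2).comp_snd.mul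
      (hk.comp_quasiMeasurePreserving (quasiMeasurePreserving_sub_of_right_invariant μ μ))
  rw [← ENNReal.pow_le_pow_left_iff two_ne_zero, sq_eLpNorm_two, mul_pow, sq_eLpNorm_two]
  simp only [enorm_eq_self]
  calc ∫⁻ x, (g ⋆ₗ[μ] k) x ^ 2 ∂μ
      ≤ ∫⁻ x, (∫⁻ y, k y ∂μ) * ∫⁻ y, g y ^ 2 * k (x - y) ∂μ ∂μ := by
        refine lintegral_mono fun x => ?_
        rw [hconv, ← lintegral_sub_left_eq_self k x]
        exact sq_lintegral_mul_le hg (hk.comp_quasiMeasurePreserving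
          (Measure.measurePreserving_sub_left μ x).quasiMeasurePreserving)
    _ = (∫⁻ y, k y ∂μ) * ∫⁻ y, g y ^ 2 * ∫⁻ x, k (x - y) ∂μ ∂μ := by
        rw [lintegral_const_mul'' _ hprod.lintegral_prod_right', lintegral_lintegral_swap hprod]
        congr 1
        refine lintegral_congr fun y => ?_
        have hk_y : AEMeasurable (fun x => k (x - y)) μ :=
          hk.comp_quasiMeasurePreserving (measurePreserving_sub_right μ y).quasiMeasurePreserving
        dsimp only
        exact lintegral_const_mul'' _ hk_y
    _ = (∫⁻ y, g y ^ 2 ∂μ) * (∫⁻ y, k y ∂μ) ^ 2 := by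
        simp_rw [lintegral_sub_right_eq_self]
        rw [lintegral_mul_const'' _ (hg.pow_const 2)]
        ring

end Group

section Interval

variable (b : ℝ)

noncomputable def truncatedPrimitive (a : ℝ → ℝ≥0∞) : ℝ → ℝ≥0∞ :=
  (Iio b).indicator fun y => ∫⁻ u in Iic y, a u

noncomputable def weightedNorm (f : ℝ → 𝕜) : ℝ≥0∞ :=
  eLpNorm (fun x => (b - x) * ‖f x‖) 2 (volume.restrict (Ioo 0 b))

/-- Extended by zero off `(0, b)`, so that convolution estimates on all of `ℝ` apply. -/
noncomputable def weightedENorm (f : ℝ → 𝕜) (s : ℝ) : ℝ≥0∞ :=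
  ‖b - s‖ₑ * ‖(Ioo 0 b).indicator f s‖ₑ

variable {b}

lemma measurable_truncatedPrimitive (a : ℝ → ℝ≥0∞) : Measurable (truncatedPrimitive b a) :=
  (Monotone.measurable fun _ _ h => lintegral_mono_set (Iic_subset_Iic.2 h)).indicator
    measurableSet_Iio

lemma lintegral_truncatedPrimitive {a : ℝ → ℝ≥0∞} (ha : AEMeasurable a) :
    ∫⁻ y, truncatedPrimitive b a y = ∫⁻ u, ENNReal.ofReal (b - u) * a u := by
  have hswap : ∀ y, truncatedPrimitive b a y = ∫⁻ u, (Ico u b).indicator (fun _ => a u) y := by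
    intro y
    by_cases hy : y < b
    · rw [truncatedPrimitive, indicator_of_mem (show y ∈ Iio b from hy),
        ← lintegral_indicator measurableSet_Iic]
      refine lintegral_congr fun u => ?_
      simp [indicator_apply, hy]
    · simp [truncatedPrimitive, hy]
  have hmeas : AEMeasurable (uncurry fun y u => (Ico u b).indicator (fun _ => a u) y)
      (volume.prod volume) :=
    ha.comp_snd.indicator
      ((measurableSet_le measurable_snd measurable_fst).inter
        (measurableSet_lt measurable_fst measurable_const))
  simp_rw [hswap]
  rw [lintegral_lintegral_swap hmeas]
  refine lintegral_congr fun u => ?_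
  rw [lintegral_indicator_const measurableSet_Ico, Real.volume_Ico, mul_comm]

lemma setLIntegral_Iic_add_left (a : ℝ → ℝ≥0∞) (s x : ℝ) :
    ∫⁻ t in Iic x, a (s + t) = ∫⁻ u in Iic (s + x), a u := by
  rw [← lintegral_indicator measurableSet_Iic, ← lintegral_indicator measurableSet_Iic]
  conv_rhs => rw [← lintegral_add_left_eq_self _ s]
  refine lintegral_congr fun t => ?_
  simp [indicator_apply]

/-- After Fubini, `∫₀ˣ (c ⋆ a) = ∫ c(s) ∫₀ˣ a(t - s) dt ds`; for `0 < s ≤ x` the inner integral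
is at most `∫_{-∞}^{x - s} a` and the weight `b - x` is at most `b - s`, while for `s > x` it
vanishes. -/
lemma enorm_sub_mul_setLIntegral_lconvolution_le {a c : ℝ → ℝ≥0∞} (ha : AEMeasurable a)
    (hc : AEMeasurable c) (ha0 : ∀ u ≤ 0, a u = 0) (hc0 : ∀ s ≤ 0, c s = 0) {x : ℝ}
    (hx : x ≤ b) :
    ‖b - x‖ₑ * ∫⁻ t in Ioc 0 x, (c ⋆ₗ a) t
      ≤ ((fun s => ‖b - s‖ₑ * c s) ⋆ₗ truncatedPrimitive b a) x := by
  have hprod : AEMeasurable (uncurry fun t s => c s * a (-s + t))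
      ((volume.restrict (Ioc 0 x)).prod volume) := by
    rw [Measure.restrict_prod_eq_prod_univ]
    refine (hc.comp_snd.mul ?_).restrict
    simp_rw [neg_add_eq_sub]
    exact ha.comp_quasiMeasurePreserving (quasiMeasurePreserving_sub_of_right_invariant _ _)
  have hpoint : ∀ s, ‖b - x‖ₑ * (c s * ∫⁻ t in Ioc 0 x, a (-s + t))
      ≤ ‖b - s‖ₑ * c s * truncatedPrimitive b a (-s + x) := by
    intro s
    rcases le_or_gt s 0 with hs0 | hs0
    · simp [hc0 s hs0]
    rcases le_or_gt s x with hsx | hxs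
    · rw [truncatedPrimitive, indicator_of_mem (show -s + x ∈ Iio b by simp; linarith),
        ← setLIntegral_Iic_add_left, mul_comm _ (c s), mul_left_comm, mul_assoc]
      gcongr
      · rw [Real.enorm_of_nonneg (by linarith), Real.enorm_of_nonneg (by linarith)]
        exact ENNReal.ofReal_le_ofReal (by linarith)
      · exact Ioc_subset_Iic_self
    · have hzero : ∫⁻ t in Ioc 0 x, a (-s + t) = 0 := by
        rw [← lintegral_zero]
        exact setLIntegral_congr_fun measurableSet_Ioc fun t ht => ha0 _ (by linarith [ht.2])
      simp [hzero]
  calc ‖b - x‖ₑ * ∫⁻ t in Ioc 0 x, (c ⋆ₗ a) t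
      = ∫⁻ s, ‖b - x‖ₑ * (c s * ∫⁻ t in Ioc 0 x, a (-s + t)) := by
        simp_rw [lconvolution_def]
        rw [lintegral_lintegral_swap hprod, ← lintegral_const_mul' _ _ enorm_ne_top]
        refine lintegral_congr fun s => ?_
        have ha_s : AEMeasurable (fun t => a (-s + t)) (volume.restrict (Ioc 0 x)) :=
          (ha.comp_quasiMeasurePreserving
            (measurePreserving_add_left volume (-s)).quasiMeasurePreserving).restrict
        rw [lintegral_const_mul'' _ ha_s]
    _ ≤ ((fun s => ‖b - s‖ₑ * c s) ⋆ₗ truncatedPrimitive b a) x := lintegral_mono hpoint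

lemma intervalIntegral_intervalIntegral_mul_eq {f g : ℝ → 𝕜} {x : ℝ} (hx : x ∈ Icc 0 b) :
    ∫ t in 0..x, ∫ s in 0..t, f (t - s) * g s
      = ∫ t in 0..x,
        ((Ioo 0 b).indicator g ⋆[ContinuousLinearMap.mul 𝕜 𝕜] (Ioo 0 b).indicator f) t := by
  refine intervalIntegral.integral_congr_ae (ae_of_all _ fun t ht => ?_)
  rw [uIoc_of_le hx.1] at ht
  obtain ⟨ht0, htb⟩ : t ∈ Ioc 0 b := ⟨ht.1, ht.2.trans hx.2⟩
  have hsupp : ∀ s, ContinuousLinearMap.mul 𝕜 𝕜 ((Ioo 0 b).indicator g s)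
      ((Ioo 0 b).indicator f (t - s)) = (Ioo 0 t).indicator (fun s => f (t - s) * g s) s := by
    intro s
    by_cases hs : s ∈ Ioo 0 t
    · obtain ⟨hs0, hst⟩ := hs
      rw [indicator_of_mem (show s ∈ Ioo 0 t from ⟨hs0, hst⟩),
        indicator_of_mem (show s ∈ Ioo 0 b from ⟨hs0, by linarith⟩),
        indicator_of_mem (show t - s ∈ Ioo 0 b from ⟨by linarith, by linarith⟩),
        ContinuousLinearMap.mul_apply', mul_comm]
    · rw [indicator_of_notMem hs]
      rcases not_and_or.1 hs with hs0 | hst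
      · simp [indicator_of_notMem (show s ∉ Ioo 0 b from fun h => hs0 h.1)]
      · simp [indicator_of_notMem (show t - s ∉ Ioo 0 b from fun h => by
          simp only [mem_Ioo] at h; exact hst (by linarith))]
  rw [intervalIntegral.integral_of_le ht0.le, integral_Ioc_eq_integral_Ioo, convolution_def,
    ← integral_indicator measurableSet_Ioo]
  simp only [hsupp]

lemma enorm_sub_mul_enorm_integral_convolution_sub_le {f g : ℝ → 𝕜} (hf : Integrable f)
    (hg : Integrable g) (hf0 : ∀ u ≤ 0, f u = 0) (hg0 : ∀ u ≤ 0, g u = 0) {x : ℝ}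
    (hx0 : 0 ≤ x) (hxb : x ≤ b) :
    ‖b - x‖ₑ * ‖∫ t in 0..x, ((f ⋆[ContinuousLinearMap.mul 𝕜 𝕜] f) t
        - (g ⋆[ContinuousLinearMap.mul 𝕜 𝕜] g) t)‖ₑ
      ≤ ((fun s => ‖b - s‖ₑ * ‖(f - g) s‖ₑ) ⋆ₗ truncatedPrimitive b (‖f ·‖ₑ)) x
        + ((fun s => ‖b - s‖ₑ * ‖g s‖ₑ) ⋆ₗ truncatedPrimitive b (‖(f - g) ·‖ₑ)) x := by
  have hfg0 : ∀ u ≤ 0, ‖(f - g) u‖ₑ = 0 := fun u hu => by simp [hf0 u hu, hg0 u hu]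
  rw [intervalIntegral.integral_of_le hx0]
  calc _ ≤ ‖b - x‖ₑ * ∫⁻ t in Ioc 0 x,
        (((‖(f - g) ·‖ₑ) ⋆ₗ (‖f ·‖ₑ)) t + ((‖g ·‖ₑ) ⋆ₗ (‖(f - g) ·‖ₑ)) t) := by
        gcongr
        refine (enorm_integral_le_lintegral_enorm _).trans
          (lintegral_mono_ae (ae_restrict_of_ae ?_))
        filter_upwards [hf.ae_convolution_exists (ContinuousLinearMap.mul 𝕜 𝕜) hf,
          hg.ae_convolution_exists (ContinuousLinearMap.mul 𝕜 𝕜) hg] with t hff hgg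
        exact enorm_convolution_self_sub_le hf.1 hg.1 hff hgg
    _ = ‖b - x‖ₑ * (∫⁻ t in Ioc 0 x, ((‖(f - g) ·‖ₑ) ⋆ₗ (‖f ·‖ₑ)) t)
        + ‖b - x‖ₑ * ∫⁻ t in Ioc 0 x, ((‖g ·‖ₑ) ⋆ₗ (‖(f - g) ·‖ₑ)) t := by
        rw [lintegral_add_left'
          (aemeasurable_lconvolution (hf.1.sub hg.1).enorm hf.1.enorm).restrict, mul_add]
    _ ≤ _ := add_le_add
        (enorm_sub_mul_setLIntegral_lconvolution_le hf.1.enorm (hf.1.sub hg.1).enorm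
          (fun u hu => by simp [hf0 u hu]) hfg0 hxb)
        (enorm_sub_mul_setLIntegral_lconvolution_le (hf.1.sub hg.1).enorm hg.1.enorm hfg0
          (fun u hu => by simp [hg0 u hu]) hxb)

lemma aemeasurable_weightedENorm {f : ℝ → 𝕜}
    (hf : AEStronglyMeasurable f (volume.restrict (Ioo 0 b))) :
    AEMeasurable (weightedENorm b f) :=
  (continuous_const.sub continuous_id).enorm.aemeasurable.mul
    ((aestronglyMeasurable_indicator_iff measurableSet_Ioo).2 hf).enorm

lemma eLpNorm_weightedENorm (f : ℝ → 𝕜) (p : ℝ≥0∞) :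
    eLpNorm (weightedENorm b f) p volume
      = eLpNorm (fun x => (b - x) * ‖f x‖) p (volume.restrict (Ioo 0 b)) := by
  rw [← eLpNorm_indicator_eq_eLpNorm_restrict measurableSet_Ioo]
  refine eLpNorm_congr_enorm_ae (ae_of_all _ fun s => ?_)
  by_cases hs : s ∈ Ioo 0 b <;> simp [weightedENorm, hs, enorm_mul]

lemma toReal_weightedNorm {f : ℝ → 𝕜}
    (hf : AEStronglyMeasurable f (volume.restrict (Ioo 0 b))) :
    (weightedNorm b f).toReal = √(∫ x in Ioo 0 b, ((b - x) * ‖f x‖) ^ 2) :=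
  (sqrt_integral_sq_eq_toReal_eLpNorm
    (((continuous_const.sub continuous_id).aestronglyMeasurable.mul hf.norm).pow 2)).symm

lemma weightedNorm_sub_le_add {f g : ℝ → 𝕜}
    (hf : AEStronglyMeasurable f (volume.restrict (Ioo 0 b)))
    (hg : AEStronglyMeasurable g (volume.restrict (Ioo 0 b))) :
    weightedNorm b (f - g) ≤ weightedNorm b f + weightedNorm b g := by
  simp only [weightedNorm, ← eLpNorm_weightedENorm]
  refine (eLpNorm_mono_enorm fun x => ?_).trans (eLpNorm_add_le
    (aemeasurable_weightedENorm hf).aestronglyMeasurable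
    (aemeasurable_weightedENorm hg).aestronglyMeasurable one_le_two)
  simp only [enorm_eq_self, Pi.add_apply, weightedENorm, indicator_sub', Pi.sub_apply, ← mul_add]
  gcongr
  exact enorm_sub_le

lemma lintegral_truncatedPrimitive_le {f : ℝ → 𝕜}
    (hf : AEStronglyMeasurable f (volume.restrict (Ioo 0 b))) (hb : 0 ≤ b) :
    ∫⁻ y, truncatedPrimitive b (‖(Ioo 0 b).indicator f ·‖ₑ) y
      ≤ ENNReal.ofReal √b * weightedNorm b f := by
  have hw : AEStronglyMeasurable (fun x => (b - x) * ‖f x‖) (volume.restrict (Ioo 0 b)) :=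
    (continuous_const.sub continuous_id).aestronglyMeasurable.mul hf.norm
  rw [lintegral_truncatedPrimitive
    ((aestronglyMeasurable_indicator_iff measurableSet_Ioo).2 hf).enorm]
  calc ∫⁻ u, ENNReal.ofReal (b - u) * ‖(Ioo 0 b).indicator f u‖ₑ
      ≤ eLpNorm (weightedENorm b f) 1 volume := by
        rw [eLpNorm_one_eq_lintegral_enorm]
        refine lintegral_mono fun u => ?_
        rw [enorm_eq_self, weightedENorm]
        gcongr
        exact Real.ofReal_le_enorm _
    _ ≤ weightedNorm b f * volume.restrict (Ioo 0 b) univ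
          ^ (1 / (1 : ℝ≥0∞).toReal - 1 / (2 : ℝ≥0∞).toReal) := by
        rw [eLpNorm_weightedENorm]
        exact eLpNorm_le_eLpNorm_mul_rpow_measure_univ one_le_two hw
    _ = ENNReal.ofReal √b * weightedNorm b f := by
        rw [Measure.restrict_apply_univ, Real.volume_Ioo, sub_zero, mul_comm,
          ENNReal.ofReal_rpow_of_nonneg hb (by norm_num), Real.sqrt_eq_rpow]
        norm_num

lemma eLpNorm_lconvolution_truncatedPrimitive_le {f g : ℝ → 𝕜}
    (hf : AEStronglyMeasurable f (volume.restrict (Ioo 0 b)))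
    (hg : AEStronglyMeasurable g (volume.restrict (Ioo 0 b))) (hb : 0 ≤ b) :
    eLpNorm (weightedENorm b g ⋆ₗ truncatedPrimitive b (‖(Ioo 0 b).indicator f ·‖ₑ)) 2 volume
      ≤ weightedNorm b g * (ENNReal.ofReal √b * weightedNorm b f) := by
  calc _ ≤ eLpNorm (weightedENorm b g) 2 volume
        * ∫⁻ y, truncatedPrimitive b (‖(Ioo 0 b).indicator f ·‖ₑ) y :=
        eLpNorm_lconvolution_le (aemeasurable_weightedENorm hg)
          (measurable_truncatedPrimitive _).aemeasurable
    _ ≤ weightedNorm b g * (ENNReal.ofReal √b * weightedNorm b f) := by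
        rw [eLpNorm_weightedENorm]
        exact mul_le_mul_right (lintegral_truncatedPrimitive_le hf hb) _

lemma weightedENorm_sub_le {f g F G : ℝ → 𝕜} (hf : IntegrableOn f (Ioo 0 b))
    (hg : IntegrableOn g (Ioo 0 b))
    (hF : ∀ x ∈ Ioo 0 b, F x = 2 * f x - ∫ t in 0..x, ∫ s in 0..t, f (t - s) * f s)
    (hG : ∀ x ∈ Ioo 0 b, G x = 2 * g x - ∫ t in 0..x, ∫ s in 0..t, g (t - s) * g s) (x : ℝ) :
    weightedENorm b (F - G) x ≤ weightedENorm b (f - g) x + weightedENorm b (f - g) x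
      + (weightedENorm b (f - g) ⋆ₗ truncatedPrimitive b (‖(Ioo 0 b).indicator f ·‖ₑ)) x
      + (weightedENorm b g ⋆ₗ truncatedPrimitive b (‖(Ioo 0 b).indicator (f - g) ·‖ₑ)) x := by
  by_cases hx : x ∈ Ioo 0 b
  swap
  · simp [weightedENorm, hx]
  set f₀ := (Ioo 0 b).indicator f
  set g₀ := (Ioo 0 b).indicator g
  have hf₀ : Integrable f₀ := (integrable_indicator_iff measurableSet_Ioo).2 hf
  have hg₀ : Integrable g₀ := (integrable_indicator_iff measurableSet_Ioo).2 hg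
  have hdiff : (F - G) x = 2 * (f - g) x
      - ∫ t in 0..x, ((f₀ ⋆[ContinuousLinearMap.mul 𝕜 𝕜] f₀) t
        - (g₀ ⋆[ContinuousLinearMap.mul 𝕜 𝕜] g₀) t) := by
    rw [Pi.sub_apply, hF x hx, hG x hx,
      intervalIntegral_intervalIntegral_mul_eq (Ioo_subset_Icc_self hx),
      intervalIntegral_intervalIntegral_mul_eq (Ioo_subset_Icc_self hx),
      intervalIntegral.integral_sub
        (hf₀.integrable_convolution _ hf₀).intervalIntegrable
        (hg₀.integrable_convolution _ hg₀).intervalIntegrable, Pi.sub_apply]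
    ring
  have hsupp : ∀ (h : ℝ → 𝕜), ∀ u ≤ (0 : ℝ), (Ioo 0 b).indicator h u = 0 :=
    fun h u hu => indicator_of_notMem (fun hu' => hu'.1.not_ge hu) _
  have hconvolution := enorm_sub_mul_enorm_integral_convolution_sub_le hf₀ hg₀ (hsupp f)
    (hsupp g) hx.1.le hx.2.le
  rw [show f₀ - g₀ = (Ioo 0 b).indicator (f - g) from (indicator_sub' _ _ _).symm]
    at hconvolution
  simp only [weightedENorm, indicator_of_mem hx, hdiff]
  calc _ ≤ ‖b - x‖ₑ * (‖(f - g) x‖ₑ + ‖(f - g) x‖ₑ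
        + ‖∫ t in 0..x, ((f₀ ⋆[ContinuousLinearMap.mul 𝕜 𝕜] f₀) t
          - (g₀ ⋆[ContinuousLinearMap.mul 𝕜 𝕜] g₀) t)‖ₑ) := by
        gcongr
        refine enorm_sub_le.trans ?_
        gcongr
        rw [two_mul]
        exact enorm_add_le _ _
    _ ≤ _ := by
        rw [mul_add, mul_add, add_assoc _ _ ((weightedENorm b g ⋆ₗ _) x)]
        gcongr
        exact hconvolution

theorem weightedNorm_sub_le (hb : 0 ≤ b) {f g F G : ℝ → 𝕜} (hf : IntegrableOn f (Ioo 0 b))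
    (hg : IntegrableOn g (Ioo 0 b))
    (hF : ∀ x ∈ Ioo 0 b, F x = 2 * f x - ∫ t in 0..x, ∫ s in 0..t, f (t - s) * f s)
    (hG : ∀ x ∈ Ioo 0 b, G x = 2 * g x - ∫ t in 0..x, ∫ s in 0..t, g (t - s) * g s) :
    weightedNorm b (F - G)
      ≤ (2 + ENNReal.ofReal √b * (weightedNorm b f + weightedNorm b g))
        * weightedNorm b (f - g) := by
  set W := weightedENorm b (f - g)
  set Φ₁ := W ⋆ₗ truncatedPrimitive b (‖(Ioo 0 b).indicator f ·‖ₑ)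
  set Φ₂ := weightedENorm b g ⋆ₗ truncatedPrimitive b (‖(Ioo 0 b).indicator (f - g) ·‖ₑ)
  have hW : AEStronglyMeasurable W :=
    (aemeasurable_weightedENorm (hf.1.sub hg.1)).aestronglyMeasurable
  have hΦ₁ : AEStronglyMeasurable Φ₁ :=
    (aemeasurable_lconvolution hW.aemeasurable
      (measurable_truncatedPrimitive _).aemeasurable).aestronglyMeasurable
  have hΦ₂ : AEStronglyMeasurable Φ₂ :=
    (aemeasurable_lconvolution (aemeasurable_weightedENorm hg.1)
      (measurable_truncatedPrimitive _).aemeasurable).aestronglyMeasurable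
  have hWnorm : eLpNorm W 2 volume = weightedNorm b (f - g) := eLpNorm_weightedENorm _ _
  calc weightedNorm b (F - G) = eLpNorm (weightedENorm b (F - G)) 2 volume :=
        (eLpNorm_weightedENorm _ _).symm
    _ ≤ eLpNorm (W + W + Φ₁ + Φ₂) 2 volume := eLpNorm_mono_enorm fun x => by
        rw [enorm_eq_self, enorm_eq_self]
        exact weightedENorm_sub_le hf hg hF hG x
    _ ≤ eLpNorm W 2 volume + eLpNorm W 2 volume + eLpNorm Φ₁ 2 volume
        + eLpNorm Φ₂ 2 volume := by
        refine (eLpNorm_add_le ((hW.add hW).add hΦ₁) hΦ₂ one_le_two).trans ?_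
        gcongr
        refine (eLpNorm_add_le (hW.add hW) hΦ₁ one_le_two).trans ?_
        gcongr
        exact eLpNorm_add_le hW hW one_le_two
    _ ≤ weightedNorm b (f - g) + weightedNorm b (f - g)
        + weightedNorm b (f - g) * (ENNReal.ofReal √b * weightedNorm b f)
        + weightedNorm b g * (ENNReal.ofReal √b * weightedNorm b (f - g)) := by
        rw [hWnorm]
        gcongr
        · exact eLpNorm_lconvolution_truncatedPrimitive_le hf.1 (hf.1.sub hg.1) hb
        · exact eLpNorm_lconvolution_truncatedPrimitive_le (hf.1.sub hg.1) hg.1 hb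
    _ = _ := by ring

end Interval

theorem stmt_14_general (r : ℝ) (N Nt M Mt : ℝ → ℂ)
    (hNint : MeasureTheory.IntegrableOn N (Set.Ioo 0 π))
    (hNtint : MeasureTheory.IntegrableOn Nt (Set.Ioo 0 π))
    (hN2 : MeasureTheory.Integrable
      (fun x => ((π - x) * ‖N x‖) ^ 2) (volume.restrict (Set.Ioo 0 π)))
    (hNt2 : MeasureTheory.Integrable
      (fun x => ((π - x) * ‖Nt x‖) ^ 2) (volume.restrict (Set.Ioo 0 π)))
    (hNr : Real.sqrt (∫ x in Set.Ioo 0 π, ((π - x) * ‖N x‖) ^ 2) ≤ r)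
    (hNtr : Real.sqrt (∫ x in Set.Ioo 0 π, ((π - x) * ‖Nt x‖) ^ 2) ≤ r)
    (hM : ∀ x ∈ Set.Ioo (0 : ℝ) π,
      M x = 2 * N x - ∫ t in (0 : ℝ)..x, ∫ s in (0 : ℝ)..t, N (t - s) * N s)
    (hMt : ∀ x ∈ Set.Ioo (0 : ℝ) π,
      Mt x = 2 * Nt x - ∫ t in (0 : ℝ)..x, ∫ s in (0 : ℝ)..t, Nt (t - s) * Nt s) :
    Real.sqrt (∫ x in Set.Ioo 0 π, ((π - x) * ‖M x - Mt x‖) ^ 2) ≤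
      (2 + 2 * r * Real.sqrt π) *
        Real.sqrt (∫ x in Set.Ioo 0 π, ((π - x) * ‖N x - Nt x‖) ^ 2) := by
  have hr : 0 ≤ r := (Real.sqrt_nonneg _).trans hNr
  have hWN : weightedNorm π N ≤ ENNReal.ofReal r :=
    (eLpNorm_eq_ofReal_sqrt_integral_sq hN2).trans_le (ENNReal.ofReal_le_ofReal hNr)
  have hWNt : weightedNorm π Nt ≤ ENNReal.ofReal r :=
    (eLpNorm_eq_ofReal_sqrt_integral_sq hNt2).trans_le (ENNReal.ofReal_le_ofReal hNtr)
  have hWD : weightedNorm π (N - Nt) ≠ ⊤ :=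
    ((weightedNorm_sub_le_add hNint.1 hNtint.1).trans_lt (ENNReal.add_lt_top.2
      ⟨hWN.trans_lt ENNReal.ofReal_lt_top, hWNt.trans_lt ENNReal.ofReal_lt_top⟩)).ne
  have hconst : 2 + ENNReal.ofReal √π * (weightedNorm π N + weightedNorm π Nt)
      ≤ ENNReal.ofReal (2 + 2 * r * √π) := by
    calc _ ≤ 2 + ENNReal.ofReal √π * (ENNReal.ofReal r + ENNReal.ofReal r) := by gcongr
      _ = ENNReal.ofReal (2 + 2 * r * √π) := by
        rw [← ENNReal.ofReal_add hr hr, ← ENNReal.ofReal_mul (Real.sqrt_nonneg _),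
          ← ENNReal.ofReal_ofNat 2, ← ENNReal.ofReal_add zero_le_two (by positivity)]
        ring_nf
  calc _ ≤ (weightedNorm π (M - Mt)).toReal := sqrt_integral_sq_le_toReal_eLpNorm _
    _ ≤ (ENNReal.ofReal (2 + 2 * r * √π) * weightedNorm π (N - Nt)).toReal :=
        ENNReal.toReal_mono (ENNReal.mul_ne_top ENNReal.ofReal_ne_top hWD)
          ((weightedNorm_sub_le pi_pos.le hNint hNtint hM hMt).trans (by gcongr))
    _ = _ := by
        rw [ENNReal.toReal_mul, ENNReal.toReal_ofReal (by positivity),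
          toReal_weightedNorm (hNint.1.sub hNtint.1)]
        rfl

theorem stmt_14 (r : ℝ) (hr : 0 < r) (N Nt M Mt : ℝ → ℂ)
    (hNint : MeasureTheory.IntegrableOn N (Set.Ioo 0 π))
    (hNtint : MeasureTheory.IntegrableOn Nt (Set.Ioo 0 π))
    (hN2 : MeasureTheory.Integrable
      (fun x => ((π - x) * ‖N x‖) ^ 2) (volume.restrict (Set.Ioo 0 π)))
    (hNt2 : MeasureTheory.Integrable
      (fun x => ((π - x) * ‖Nt x‖) ^ 2) (volume.restrict (Set.Ioo 0 π)))
    (hNr : Real.sqrt (∫ x in Set.Ioo 0 π, ((π - x) * ‖N x‖) ^ 2) ≤ r)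
    (hNtr : Real.sqrt (∫ x in Set.Ioo 0 π, ((π - x) * ‖Nt x‖) ^ 2) ≤ r)
    (hM : ∀ x ∈ Set.Ioo (0 : ℝ) π,
      M x = 2 * N x - ∫ t in (0 : ℝ)..x, ∫ s in (0 : ℝ)..t, N (t - s) * N s)
    (hMt : ∀ x ∈ Set.Ioo (0 : ℝ) π,
      Mt x = 2 * Nt x - ∫ t in (0 : ℝ)..x, ∫ s in (0 : ℝ)..t, Nt (t - s) * Nt s) :
    Real.sqrt (∫ x in Set.Ioo 0 π, ((π - x) * ‖M x - Mt x‖) ^ 2) ≤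
      (2 + 2 * r * Real.sqrt π) *
        Real.sqrt (∫ x in Set.Ioo 0 π, ((π - x) * ‖N x - Nt x‖) ^ 2) :=
  stmt_14_general r N Nt M Mt hNint hNtint hN2 hNt2 hNr hNtr hM hMt
end

section
/- Under the assumptions of the previous statement but with the weighted uniform norm ‖f‖_{∞,π} = ess sup (π-x)|f(x)|, one has ‖(π-·)(M - M̃)‖_{L^∞(0,π)} ≤ 2(1 + r√π)·‖(π-·)(N - Ñ)‖_{L^∞(0,π)}. -/
/-!
Write `w x = π - x` and `C = ‖w (N - Ñ)‖_∞`. On `(0, π)` we have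
`M - M̃ = 2 (N - Ñ) - ∫₀ˣ (N ∗ N - Ñ ∗ Ñ)` and, pointwise,
`|N ∗ N - Ñ ∗ Ñ| ≤ (|N| + |Ñ|) ∗ |N - Ñ|`. As `w` decreases, `w x |N - Ñ| (s) ≤ C` for `s < x`, so
`w x |∫₀ˣ (N ∗ N - Ñ ∗ Ñ)| ≤ C ∫₀ˣ (x - u) (|N| + |Ñ|) (u) du`. Finally
`∫₀ˣ (x - u) |N u| du ≤ √π ‖w N‖₂ ≤ √π r` by Cauchy–Schwarz, using `x - u ≤ π - u`.
-/

open Real MeasureTheory intervalIntegral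
open Set
open scoped ENNReal

lemma setLIntegral_Ioo_comp_sub_left (f : ℝ → ℝ≥0∞) (t : ℝ) :
    ∫⁻ s in Ioo 0 t, f (t - s) = ∫⁻ s in Ioo 0 t, f s := by
  rw [← (Measure.measurePreserving_sub_left volume t).setLIntegral_comp_preimage_emb
    (MeasurableEquiv.subLeft t).measurableEmbedding, preimage_const_sub_Ioo]
  norm_num

lemma setLIntegral_Ioo_setLIntegral_Ioo {f : ℝ → ℝ≥0∞} (hf : Measurable f) (x : ℝ) :
    ∫⁻ t in Ioo 0 x, ∫⁻ u in Ioo 0 t, f u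
      = ∫⁻ u in Ioo 0 x, ENNReal.ofReal (x - u) * f u := by
  set F : ℝ → ℝ → ℝ≥0∞ := fun t u => {p : ℝ × ℝ | p.2 < p.1}.indicator (f ∘ Prod.snd) (t, u)
  have hF : Measurable (Function.uncurry F) :=
    (hf.comp measurable_snd).indicator (measurableSet_lt measurable_snd measurable_fst)
  have inner (t : ℝ) (ht : t ∈ Ioo 0 x) : ∫⁻ u in Ioo 0 t, f u = ∫⁻ u in Ioo 0 x, F t u := by
    have : ∀ u, F t u = (Iio t).indicator f u := fun u => by
      simp [F, indicator_apply]
    simp_rw [this]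
    rw [lintegral_indicator measurableSet_Iio, Measure.restrict_restrict measurableSet_Iio,
      Iio_inter_Ioo, min_eq_left ht.2.le]
  have outer (u : ℝ) (hu : u ∈ Ioo 0 x) :
      ∫⁻ t in Ioo 0 x, F t u = ENNReal.ofReal (x - u) * f u := by
    have : ∀ t, F t u = (Ioi u).indicator (fun _ => f u) t := fun t => by
      simp [F, indicator_apply]
    simp_rw [this]
    rw [lintegral_indicator measurableSet_Ioi, setLIntegral_const,
      Measure.restrict_apply measurableSet_Ioi, Ioi_inter_Ioo, max_eq_left hu.1.le,
      Real.volume_Ioo, mul_comm]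
  calc ∫⁻ t in Ioo 0 x, ∫⁻ u in Ioo 0 t, f u
      = ∫⁻ t in Ioo 0 x, ∫⁻ u in Ioo 0 x, F t u := setLIntegral_congr_fun measurableSet_Ioo inner
    _ = ∫⁻ u in Ioo 0 x, ∫⁻ t in Ioo 0 x, F t u := lintegral_lintegral_swap hF.aemeasurable
    _ = _ := setLIntegral_congr_fun measurableSet_Ioo outer

lemma setLIntegral_Ioo_sub_mul_le {a x : ℝ} (hx : x ≤ a) {g : ℝ → ℝ≥0∞}
    (hg : AEMeasurable g (volume.restrict (Ioo 0 a))) {B : ℝ≥0∞}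
    (hB : ∫⁻ u in Ioo 0 a, (ENNReal.ofReal (a - u) * g u) ^ (2 : ℝ) ≤ B ^ (2 : ℝ)) :
    ∫⁻ u in Ioo 0 x, ENNReal.ofReal (x - u) * g u ≤ ENNReal.ofReal √a * B := by
  have hsub : Ioo 0 x ⊆ Ioo 0 a := Ioo_subset_Ioo_right hx
  set k : ℝ → ℝ≥0∞ := fun u => ENNReal.ofReal ((x - u) / (a - u))
  -- Cauchy–Schwarz after writing `x - u = (x - u) / (a - u) * (a - u)`, the first factor ≤ 1
  have hfactor (u : ℝ) (hu : u ∈ Ioo 0 x) :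
      ENNReal.ofReal (x - u) * g u = (k * fun u => ENNReal.ofReal (a - u) * g u) u := by
    have hau : 0 < a - u := by linarith [hu.2]
    rw [Pi.mul_apply, ← mul_assoc, ← ENNReal.ofReal_mul (div_nonneg (by linarith [hu.2]) hau.le),
      div_mul_cancel₀ _ hau.ne']
  have hk : ∫⁻ u in Ioo 0 x, k u ^ (2 : ℝ) ≤ ENNReal.ofReal √a ^ (2 : ℝ) := by
    calc ∫⁻ u in Ioo 0 x, k u ^ (2 : ℝ) ≤ ∫⁻ _ in Ioo 0 x, 1 := by
          refine setLIntegral_mono' measurableSet_Ioo fun u hu => ?_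
          refine ENNReal.rpow_le_one (ENNReal.ofReal_le_one.mpr ?_) zero_le_two
          exact (div_le_one (by linarith [hu.2])).mpr (by linarith [hu.1])
      _ ≤ ENNReal.ofReal √a ^ (2 : ℝ) := by
          rw [setLIntegral_one, Real.volume_Ioo, ENNReal.rpow_two,
            ← ENNReal.ofReal_pow (Real.sqrt_nonneg a), Real.sq_sqrt']
          exact ENNReal.ofReal_le_ofReal (by linarith [le_max_left a 0])
  have hkm : AEMeasurable k (volume.restrict (Ioo 0 x)) := by fun_prop
  have hwm : AEMeasurable (fun u => ENNReal.ofReal (a - u) * g u) (volume.restrict (Ioo 0 x)) :=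
    (by fun_prop : Measurable fun u : ℝ => ENNReal.ofReal (a - u)).aemeasurable.mul
      (hg.mono_measure (Measure.restrict_mono hsub le_rfl))
  calc ∫⁻ u in Ioo 0 x, ENNReal.ofReal (x - u) * g u
      = ∫⁻ u in Ioo 0 x, (k * fun u => ENNReal.ofReal (a - u) * g u) u :=
        setLIntegral_congr_fun measurableSet_Ioo hfactor
    _ ≤ (∫⁻ u in Ioo 0 x, k u ^ (2 : ℝ)) ^ (1 / (2 : ℝ)) *
          (∫⁻ u in Ioo 0 x, (ENNReal.ofReal (a - u) * g u) ^ (2 : ℝ)) ^ (1 / (2 : ℝ)) :=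
        ENNReal.lintegral_mul_le_Lp_mul_Lq _ Real.HolderConjugate.two_two hkm hwm
    _ ≤ (ENNReal.ofReal √a ^ (2 : ℝ)) ^ (1 / (2 : ℝ)) * (B ^ (2 : ℝ)) ^ (1 / (2 : ℝ)) := by
        gcongr
        exact (lintegral_mono_set hsub).trans hB
    _ = ENNReal.ofReal √a * B := by
        rw [← ENNReal.rpow_mul, ← ENNReal.rpow_mul]
        norm_num

lemma setLIntegral_Ioo_rpow_two_ne_top {a t : ℝ} (ht : t < a) {g : ℝ → ℝ≥0∞}
    (hg : ∫⁻ u in Ioo 0 a, (ENNReal.ofReal (a - u) * g u) ^ (2 : ℝ) ≠ ∞) :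
    ∫⁻ u in Ioo 0 t, g u ^ (2 : ℝ) ≠ ∞ := by
  set c : ℝ≥0∞ := ENNReal.ofReal (a - t)⁻¹ ^ (2 : ℝ)
  have hle : ∫⁻ u in Ioo 0 t, g u ^ (2 : ℝ)
      ≤ c * ∫⁻ u in Ioo 0 a, (ENNReal.ofReal (a - u) * g u) ^ (2 : ℝ) := by
    rw [← lintegral_const_mul' _ _ (by simp [c])]
    refine (setLIntegral_mono' measurableSet_Ioo fun u hu => ?_).trans
      (lintegral_mono_set (Ioo_subset_Ioo_right ht.le))
    have hat : 0 < a - t := sub_pos.mpr ht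
    calc g u ^ (2 : ℝ) = (ENNReal.ofReal ((a - t)⁻¹ * (a - t)) * g u) ^ (2 : ℝ) := by
          rw [inv_mul_cancel₀ hat.ne', ENNReal.ofReal_one, one_mul]
      _ ≤ (ENNReal.ofReal ((a - t)⁻¹ * (a - u)) * g u) ^ (2 : ℝ) := by
          gcongr
          exact hu.2.le
      _ = c * (ENNReal.ofReal (a - u) * g u) ^ (2 : ℝ) := by
          rw [ENNReal.ofReal_mul (inv_pos.mpr hat).le, mul_assoc,
            ENNReal.mul_rpow_of_nonneg _ _ zero_le_two]
  exact ne_top_of_le_ne_top (ENNReal.mul_ne_top (by simp [c]) hg) hle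

lemma setLIntegral_Ioo_comp_sub_mul_le {f g : ℝ → ℝ≥0∞} (hf : Measurable f) (hg : Measurable g)
    (t : ℝ) :
    ∫⁻ s in Ioo 0 t, f (t - s) * g s
      ≤ (∫⁻ u in Ioo 0 t, f u ^ (2 : ℝ)) ^ (1 / (2 : ℝ))
        * (∫⁻ u in Ioo 0 t, g u ^ (2 : ℝ)) ^ (1 / (2 : ℝ)) := by
  rw [← setLIntegral_Ioo_comp_sub_left (fun u => f u ^ (2 : ℝ)) t]
  exact ENNReal.lintegral_mul_le_Lp_mul_Lq _ Real.HolderConjugate.two_two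
    (by fun_prop) hg.aemeasurable

/-- The paper's `(f ∗ g)(t)`, so that its `(1 ∗ f ∗ g)(x)` is `∫₀ˣ volterraConv f g`. -/
noncomputable def volterraConv (f g : ℝ → ℂ) (t : ℝ) : ℂ := ∫ s in (0 : ℝ)..t, f (t - s) * g s

lemma enorm_intervalIntegral_le {E : Type*} [NormedAddCommGroup E] [NormedSpace ℝ E] {f : ℝ → E}
    {a b : ℝ} (hab : a ≤ b) :
    ‖∫ s in a..b, f s‖ₑ ≤ ∫⁻ s in Ioo a b, ‖f s‖ₑ := by
  rw [intervalIntegral.integral_of_le hab, Measure.restrict_congr_set Ioo_ae_eq_Ioc.symm]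
  exact enorm_integral_le_lintegral_enorm _

lemma enorm_volterraConv_le {f g : ℝ → ℂ} (hf : Measurable f) (hg : Measurable g) {t : ℝ}
    (ht : 0 ≤ t) :
    ‖volterraConv f g t‖ₑ
      ≤ (∫⁻ u in Ioo 0 t, ‖f u‖ₑ ^ (2 : ℝ)) ^ (1 / (2 : ℝ))
        * (∫⁻ u in Ioo 0 t, ‖g u‖ₑ ^ (2 : ℝ)) ^ (1 / (2 : ℝ)) := by
  refine (enorm_intervalIntegral_le ht).trans ?_
  simp only [enorm_mul]
  exact setLIntegral_Ioo_comp_sub_mul_le hf.enorm hg.enorm t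

lemma volterraConv_congr_ae {a t : ℝ} (ht : 0 ≤ t) (hta : t ≤ a) {f f₁ g g₁ : ℝ → ℂ}
    (hf : f =ᵐ[volume.restrict (Ioo 0 a)] f₁) (hg : g =ᵐ[volume.restrict (Ioo 0 a)] g₁) :
    volterraConv f g t = volterraConv f₁ g₁ t := by
  have hf' : ∀ᵐ u, u ∈ Ioo 0 a → f u = f₁ u := (ae_restrict_iff' measurableSet_Ioo).mp hf
  have hg' : ∀ᵐ u, u ∈ Ioo 0 a → g u = g₁ u := (ae_restrict_iff' measurableSet_Ioo).mp hg
  refine intervalIntegral.integral_congr_ae ?_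
  filter_upwards [(Measure.measurePreserving_sub_left volume t).quasiMeasurePreserving.ae hf',
    hg', volume.ae_ne t] with s hfs hgs hst hs
  rw [uIoc_of_le ht] at hs
  have hs' : s < t := lt_of_le_of_ne hs.2 hst
  rw [hfs ⟨by linarith, by linarith [hs.1]⟩, hgs ⟨hs.1, by linarith⟩]

lemma intervalIntegral_volterraConv_congr_ae {a x : ℝ} (hx : 0 ≤ x) (hxa : x ≤ a)
    {f f₁ g g₁ : ℝ → ℂ} (hf : f =ᵐ[volume.restrict (Ioo 0 a)] f₁)
    (hg : g =ᵐ[volume.restrict (Ioo 0 a)] g₁) :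
    ∫ t in (0 : ℝ)..x, volterraConv f g t = ∫ t in (0 : ℝ)..x, volterraConv f₁ g₁ t :=
  intervalIntegral.integral_congr fun t ht => by
    rw [uIcc_of_le hx] at ht
    exact volterraConv_congr_ae ht.1 (ht.2.trans hxa) hf hg


lemma intervalIntegrable_comp_sub_mul {f g : ℝ → ℂ} (hf : Measurable f) (hg : Measurable g)
    {t : ℝ} (ht : 0 ≤ t) (hf2 : ∫⁻ u in Ioo 0 t, ‖f u‖ₑ ^ (2 : ℝ) ≠ ∞)
    (hg2 : ∫⁻ u in Ioo 0 t, ‖g u‖ₑ ^ (2 : ℝ) ≠ ∞) :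
    IntervalIntegrable (fun s => f (t - s) * g s) volume 0 t := by
  rw [intervalIntegrable_iff_integrableOn_Ioo_of_le ht]
  refine ⟨by fun_prop, ?_⟩
  rw [hasFiniteIntegral_def]
  simp only [enorm_mul]
  refine (setLIntegral_Ioo_comp_sub_mul_le hf.enorm hg.enorm t).trans_lt ?_
  exact ENNReal.mul_lt_top (ENNReal.rpow_lt_top_of_nonneg (by norm_num) hf2)
    (ENNReal.rpow_lt_top_of_nonneg (by norm_num) hg2)

lemma aestronglyMeasurable_volterraConv {f g : ℝ → ℂ} (hf : Measurable f) (hg : Measurable g) :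
    AEStronglyMeasurable (volterraConv f g) (volume.restrict (Ioi 0)) := by
  set S : Set (ℝ × ℝ) := {p | 0 < p.2 ∧ p.2 ≤ p.1}
  have hS : MeasurableSet S := (measurableSet_lt measurable_const measurable_snd).inter
    (measurableSet_le measurable_snd measurable_fst)
  have hG : StronglyMeasurable fun t => ∫ s, S.indicator (fun p => f (p.1 - p.2) * g p.2) (t, s) :=
    .integral_prod_right' ((by fun_prop : Measurable fun p : ℝ × ℝ => f (p.1 - p.2) * g p.2)
      |>.indicator hS).stronglyMeasurable
  refine hG.aestronglyMeasurable.congr ((ae_restrict_iff' measurableSet_Ioi).mpr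
    (ae_of_all _ fun t ht => ?_))
  rw [volterraConv, intervalIntegral.integral_of_le (le_of_lt ht),
    ← MeasureTheory.integral_indicator measurableSet_Ioc]
  congr 1 with s

lemma intervalIntegrable_volterraConv {f g : ℝ → ℂ} (hf : Measurable f) (hg : Measurable g)
    {x : ℝ} (hx : 0 ≤ x) (hf2 : ∫⁻ u in Ioo 0 x, ‖f u‖ₑ ^ (2 : ℝ) ≠ ∞)
    (hg2 : ∫⁻ u in Ioo 0 x, ‖g u‖ₑ ^ (2 : ℝ) ≠ ∞) :
    IntervalIntegrable (volterraConv f g) volume 0 x := by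
  rw [intervalIntegrable_iff_integrableOn_Ioo_of_le hx]
  refine ⟨(aestronglyMeasurable_volterraConv hf hg).mono_measure
    (Measure.restrict_mono Ioo_subset_Ioi_self le_rfl), .of_bounded_enorm
      (C := (∫⁻ u in Ioo 0 x, ‖f u‖ₑ ^ (2 : ℝ)) ^ (1 / (2 : ℝ))
        * (∫⁻ u in Ioo 0 x, ‖g u‖ₑ ^ (2 : ℝ)) ^ (1 / (2 : ℝ)))
      (ENNReal.mul_ne_top (ENNReal.rpow_ne_top_of_nonneg (by norm_num) hf2)
        (ENNReal.rpow_ne_top_of_nonneg (by norm_num) hg2)) ?_⟩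
  refine (ae_restrict_iff' measurableSet_Ioo).mpr (ae_of_all _ fun t ht => ?_)
  refine (enorm_volterraConv_le hf hg ht.1.le).trans ?_
  have hsub : Ioo 0 t ⊆ Ioo 0 x := Ioo_subset_Ioo_right ht.2.le
  gcongr

lemma enorm_volterraConv_sub_le {f g : ℝ → ℂ} (hf : Measurable f) (hg : Measurable g) {t : ℝ}
    (ht : 0 ≤ t) (hf2 : ∫⁻ u in Ioo 0 t, ‖f u‖ₑ ^ (2 : ℝ) ≠ ∞)
    (hg2 : ∫⁻ u in Ioo 0 t, ‖g u‖ₑ ^ (2 : ℝ) ≠ ∞) :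
    ‖volterraConv f f t - volterraConv g g t‖ₑ
      ≤ ∫⁻ s in Ioo 0 t, (‖f (t - s)‖ₑ + ‖g (t - s)‖ₑ) * ‖f s - g s‖ₑ := by
  rw [volterraConv, volterraConv, ← intervalIntegral.integral_sub
    (intervalIntegrable_comp_sub_mul hf hf ht hf2 hf2)
    (intervalIntegrable_comp_sub_mul hg hg ht hg2 hg2)]
  refine (enorm_intervalIntegral_le ht).trans ?_
  -- `f (t - s) f s - g (t - s) g s = f (t - s) (f s - g s) + (f (t - s) - g (t - s)) g s`,
  -- and `s ↦ t - s` turns the second term into `g (t - s) (f s - g s)`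
  have hsplit (s : ℝ) : ‖f (t - s) * f s - g (t - s) * g s‖ₑ
      ≤ ‖f (t - s)‖ₑ * ‖f s - g s‖ₑ + ‖f (t - s) - g (t - s)‖ₑ * ‖g s‖ₑ := by
    rw [← enorm_mul, ← enorm_mul]
    exact (congrArg _ (by ring)).trans_le (enorm_add_le _ _)
  calc ∫⁻ s in Ioo 0 t, ‖f (t - s) * f s - g (t - s) * g s‖ₑ
      ≤ ∫⁻ s in Ioo 0 t, (‖f (t - s)‖ₑ * ‖f s - g s‖ₑ + ‖f (t - s) - g (t - s)‖ₑ * ‖g s‖ₑ) :=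
        lintegral_mono hsplit
    _ = (∫⁻ s in Ioo 0 t, ‖f (t - s)‖ₑ * ‖f s - g s‖ₑ)
          + ∫⁻ s in Ioo 0 t, ‖g (t - s)‖ₑ * ‖f s - g s‖ₑ := by
        rw [lintegral_add_left (by fun_prop),
          ← setLIntegral_Ioo_comp_sub_left (fun s => ‖g (t - s)‖ₑ * ‖f s - g s‖ₑ)]
        simp only [sub_sub_cancel, mul_comm]
    _ = ∫⁻ s in Ioo 0 t, (‖f (t - s)‖ₑ + ‖g (t - s)‖ₑ) * ‖f s - g s‖ₑ := by
        rw [← lintegral_add_left (by fun_prop)]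
        simp only [add_mul]

lemma mul_setLIntegral_Ioo_comp_sub_mul_le {a x : ℝ} (hx : x ≤ a) {φ d : ℝ → ℝ≥0∞}
    (hφ : Measurable φ) {C : ℝ≥0∞}
    (hC : ∀ᵐ s ∂volume.restrict (Ioo 0 a), ENNReal.ofReal (a - s) * d s ≤ C) :
    ENNReal.ofReal (a - x) * ∫⁻ t in Ioo 0 x, ∫⁻ s in Ioo 0 t, φ (t - s) * d s
      ≤ C * ∫⁻ u in Ioo 0 x, ENNReal.ofReal (x - u) * φ u := by
  have hmono : Monotone fun t => ∫⁻ u in Ioo 0 t, φ u :=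
    fun _ _ h => lintegral_mono_set (Ioo_subset_Ioo_right h)
  calc ENNReal.ofReal (a - x) * ∫⁻ t in Ioo 0 x, ∫⁻ s in Ioo 0 t, φ (t - s) * d s
      ≤ ∫⁻ t in Ioo 0 x, ENNReal.ofReal (a - x) * ∫⁻ s in Ioo 0 t, φ (t - s) * d s :=
        lintegral_const_mul_le _ _
    _ ≤ ∫⁻ t in Ioo 0 x, ∫⁻ s in Ioo 0 t, φ (t - s) * C := by
        refine setLIntegral_mono' measurableSet_Ioo fun t ht =>
          (lintegral_const_mul_le _ _).trans (lintegral_mono_ae ?_)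
        filter_upwards [ae_restrict_of_ae_restrict_of_subset
          (Ioo_subset_Ioo_right (ht.2.le.trans hx)) hC,
          ae_restrict_mem measurableSet_Ioo] with s hCs hs
        calc ENNReal.ofReal (a - x) * (φ (t - s) * d s)
            = φ (t - s) * (ENNReal.ofReal (a - x) * d s) := mul_left_comm _ _ _
          _ ≤ φ (t - s) * (ENNReal.ofReal (a - s) * d s) := by
              gcongr
              linarith [hs.2, ht.2]
          _ ≤ φ (t - s) * C := by gcongr
    _ = ∫⁻ t in Ioo 0 x, (∫⁻ u in Ioo 0 t, φ u) * C := by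
        refine setLIntegral_congr_fun measurableSet_Ioo fun t _ => ?_
        rw [lintegral_mul_const _ (by fun_prop), setLIntegral_Ioo_comp_sub_left]
    _ = C * ∫⁻ u in Ioo 0 x, ENNReal.ofReal (x - u) * φ u := by
        rw [lintegral_mul_const _ hmono.measurable, setLIntegral_Ioo_setLIntegral_Ioo hφ, mul_comm]

theorem weighted_enorm_intervalIntegral_volterraConv_sub_le_of_measurable {a x : ℝ}
    (hx : x ∈ Ioo 0 a) {f g : ℝ → ℂ} (hf : Measurable f) (hg : Measurable g)
    {B C : ℝ≥0∞} (hB : B ≠ ∞)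
    (hfB : ∫⁻ u in Ioo 0 a, (ENNReal.ofReal (a - u) * ‖f u‖ₑ) ^ (2 : ℝ) ≤ B ^ (2 : ℝ))
    (hgB : ∫⁻ u in Ioo 0 a, (ENNReal.ofReal (a - u) * ‖g u‖ₑ) ^ (2 : ℝ) ≤ B ^ (2 : ℝ))
    (hC : ∀ᵐ s ∂volume.restrict (Ioo 0 a), ENNReal.ofReal (a - s) * ‖f s - g s‖ₑ ≤ C) :
    ENNReal.ofReal (a - x) *
        ‖(∫ t in (0 : ℝ)..x, volterraConv f f t) - ∫ t in (0 : ℝ)..x, volterraConv g g t‖ₑ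
      ≤ 2 * ENNReal.ofReal √a * B * C := by
  have hB2 : B ^ (2 : ℝ) ≠ ∞ := ENNReal.rpow_ne_top_of_nonneg zero_le_two hB
  have hf2 (t : ℝ) (ht : t ≤ x) : ∫⁻ u in Ioo 0 t, ‖f u‖ₑ ^ (2 : ℝ) ≠ ∞ :=
    setLIntegral_Ioo_rpow_two_ne_top (ht.trans_lt hx.2) (ne_top_of_le_ne_top hB2 hfB)
  have hg2 (t : ℝ) (ht : t ≤ x) : ∫⁻ u in Ioo 0 t, ‖g u‖ₑ ^ (2 : ℝ) ≠ ∞ :=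
    setLIntegral_Ioo_rpow_two_ne_top (ht.trans_lt hx.2) (ne_top_of_le_ne_top hB2 hgB)
  rw [← intervalIntegral.integral_sub
    (intervalIntegrable_volterraConv hf hf hx.1.le (hf2 x le_rfl) (hf2 x le_rfl))
    (intervalIntegrable_volterraConv hg hg hx.1.le (hg2 x le_rfl) (hg2 x le_rfl))]
  calc ENNReal.ofReal (a - x) * ‖∫ t in (0 : ℝ)..x, (volterraConv f f t - volterraConv g g t)‖ₑ
      ≤ ENNReal.ofReal (a - x) * ∫⁻ t in Ioo 0 x, ∫⁻ s in Ioo 0 t,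
          (‖f (t - s)‖ₑ + ‖g (t - s)‖ₑ) * ‖f s - g s‖ₑ := by
        gcongr
        refine (enorm_intervalIntegral_le hx.1.le).trans
          (setLIntegral_mono' measurableSet_Ioo fun t ht => ?_)
        exact enorm_volterraConv_sub_le hf hg ht.1.le (hf2 t ht.2.le) (hg2 t ht.2.le)
    _ ≤ C * ∫⁻ u in Ioo 0 x, ENNReal.ofReal (x - u) * (‖f u‖ₑ + ‖g u‖ₑ) :=
        mul_setLIntegral_Ioo_comp_sub_mul_le (φ := fun u => ‖f u‖ₑ + ‖g u‖ₑ)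
          (d := fun s => ‖f s - g s‖ₑ) hx.2.le (by fun_prop) hC
    _ ≤ C * (ENNReal.ofReal √a * B + ENNReal.ofReal √a * B) := by
        gcongr
        simp_rw [mul_add]
        rw [lintegral_add_left (by fun_prop)]
        gcongr
        exacts [setLIntegral_Ioo_sub_mul_le hx.2.le (by fun_prop) hfB,
          setLIntegral_Ioo_sub_mul_le hx.2.le (by fun_prop) hgB]
    _ = 2 * ENNReal.ofReal √a * B * C := by ring
theorem weighted_enorm_intervalIntegral_volterraConv_sub_le {a x : ℝ} (hx : x ∈ Ioo 0 a)
    {f g : ℝ → ℂ} (hf : AEMeasurable f (volume.restrict (Ioo 0 a)))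
    (hg : AEMeasurable g (volume.restrict (Ioo 0 a))) {B C : ℝ≥0∞} (hB : B ≠ ∞)
    (hfB : ∫⁻ u in Ioo 0 a, (ENNReal.ofReal (a - u) * ‖f u‖ₑ) ^ (2 : ℝ) ≤ B ^ (2 : ℝ))
    (hgB : ∫⁻ u in Ioo 0 a, (ENNReal.ofReal (a - u) * ‖g u‖ₑ) ^ (2 : ℝ) ≤ B ^ (2 : ℝ))
    (hC : ∀ᵐ s ∂volume.restrict (Ioo 0 a), ENNReal.ofReal (a - s) * ‖f s - g s‖ₑ ≤ C) :
    ENNReal.ofReal (a - x) *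
        ‖(∫ t in (0 : ℝ)..x, volterraConv f f t) - ∫ t in (0 : ℝ)..x, volterraConv g g t‖ₑ
      ≤ 2 * ENNReal.ofReal √a * B * C := by
  have hf₁ := hf.ae_eq_mk
  have hg₁ := hg.ae_eq_mk
  rw [intervalIntegral_volterraConv_congr_ae hx.1.le hx.2.le hf₁ hf₁,
    intervalIntegral_volterraConv_congr_ae hx.1.le hx.2.le hg₁ hg₁]
  refine weighted_enorm_intervalIntegral_volterraConv_sub_le_of_measurable hx hf.measurable_mk
    hg.measurable_mk hB ((lintegral_congr_ae ?_).trans_le hfB)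
    ((lintegral_congr_ae ?_).trans_le hgB) ?_
  · filter_upwards [hf₁] with u hu
    rw [hu]
  · filter_upwards [hg₁] with u hu
    rw [hu]
  · filter_upwards [hC, hf₁, hg₁] with s hs hfs hgs
    rwa [← hfs, ← hgs]

lemma setLIntegral_weighted_rpow_two_le {a r : ℝ} {f : ℝ → ℂ}
    (hf : Integrable (fun x => ((a - x) * ‖f x‖) ^ 2) (volume.restrict (Ioo 0 a)))
    (hr : √(∫ x in Ioo 0 a, ((a - x) * ‖f x‖) ^ 2) ≤ r) :
    ∫⁻ x in Ioo 0 a, (ENNReal.ofReal (a - x) * ‖f x‖ₑ) ^ (2 : ℝ) ≤ ENNReal.ofReal r ^ (2 : ℝ) := by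
  have hr0 : 0 ≤ r := (Real.sqrt_nonneg _).trans hr
  calc ∫⁻ x in Ioo 0 a, (ENNReal.ofReal (a - x) * ‖f x‖ₑ) ^ (2 : ℝ)
      = ∫⁻ x in Ioo 0 a, ENNReal.ofReal (((a - x) * ‖f x‖) ^ 2) := by
        refine setLIntegral_congr_fun measurableSet_Ioo fun x hx => ?_
        have hax : 0 ≤ a - x := by linarith [hx.2]
        rw [ENNReal.rpow_two, ← ofReal_norm, ← ENNReal.ofReal_mul hax,
          ENNReal.ofReal_pow (mul_nonneg hax (norm_nonneg _))]
    _ = ENNReal.ofReal (∫ x in Ioo 0 a, ((a - x) * ‖f x‖) ^ 2) :=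
        (ofReal_integral_eq_lintegral_ofReal hf (ae_of_all _ fun _ => sq_nonneg _)).symm
    _ ≤ ENNReal.ofReal r ^ (2 : ℝ) := by
        rw [ENNReal.rpow_two, ← ENNReal.ofReal_pow hr0]
        exact ENNReal.ofReal_le_ofReal ((Real.sqrt_le_left hr0).mp hr)

lemma enorm_ofReal_sub_mul {a x : ℝ} (hx : x ≤ a) (z : ℂ) :
    ‖((a : ℂ) - x) * z‖ₑ = ENNReal.ofReal (a - x) * ‖z‖ₑ := by
  rw [enorm_mul, ← Complex.ofReal_sub, ← ofReal_norm, Complex.norm_real,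
    Real.norm_of_nonneg (sub_nonneg.mpr hx)]

theorem stmt_15_general (r : ℝ) (N Nt M Mt : ℝ → ℂ)
    (hNint : MeasureTheory.IntegrableOn N (Set.Ioo 0 π))
    (hNtint : MeasureTheory.IntegrableOn Nt (Set.Ioo 0 π))
    (hNr : Real.sqrt (∫ x in Set.Ioo 0 π, ((π - x) * ‖N x‖) ^ 2) ≤ r)
    (hNtr : Real.sqrt (∫ x in Set.Ioo 0 π, ((π - x) * ‖Nt x‖) ^ 2) ≤ r)
    (hN2 : MeasureTheory.Integrable
      (fun x => ((π - x) * ‖N x‖) ^ 2) (volume.restrict (Set.Ioo 0 π)))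
    (hNt2 : MeasureTheory.Integrable
      (fun x => ((π - x) * ‖Nt x‖) ^ 2) (volume.restrict (Set.Ioo 0 π)))
    (hM : ∀ x ∈ Set.Ioo (0 : ℝ) π,
      M x = 2 * N x - ∫ t in (0 : ℝ)..x, ∫ s in (0 : ℝ)..t, N (t - s) * N s)
    (hMt : ∀ x ∈ Set.Ioo (0 : ℝ) π,
      Mt x = 2 * Nt x - ∫ t in (0 : ℝ)..x, ∫ s in (0 : ℝ)..t, Nt (t - s) * Nt s) :
    eLpNorm (fun x => (π - x) * (M x - Mt x)) ⊤ (volume.restrict (Set.Ioo 0 π)) ≤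
      ENNReal.ofReal (2 * (1 + r * Real.sqrt π)) *
        eLpNorm (fun x => (π - x) * (N x - Nt x)) ⊤ (volume.restrict (Set.Ioo 0 π)) := by
  set C := eLpNorm (fun x => (π - x) * (N x - Nt x)) ⊤ (volume.restrict (Ioo 0 π))
  have hC : ∀ᵐ x ∂volume.restrict (Ioo 0 π), ENNReal.ofReal (π - x) * ‖N x - Nt x‖ₑ ≤ C := by
    filter_upwards [enorm_ae_le_eLpNormEssSup (fun x => (π - x) * (N x - Nt x)) _,
      ae_restrict_mem measurableSet_Ioo] with x hCx hx
    rwa [enorm_ofReal_sub_mul hx.2.le, ← eLpNorm_exponent_top] at hCx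
  have hr : 0 ≤ r := (Real.sqrt_nonneg _).trans hNr
  rw [eLpNorm_exponent_top]
  refine essSup_le_of_ae_le _ ?_
  filter_upwards [ae_restrict_mem measurableSet_Ioo, hC] with x hx hCx
  rw [enorm_ofReal_sub_mul hx.2.le, hM x hx, hMt x hx]
  set I := ∫ t in (0 : ℝ)..x, ∫ s in (0 : ℝ)..t, N (t - s) * N s
  set It := ∫ t in (0 : ℝ)..x, ∫ s in (0 : ℝ)..t, Nt (t - s) * Nt s
  have hconv : ENNReal.ofReal (π - x) * ‖I - It‖ₑ ≤ 2 * ENNReal.ofReal √π * ENNReal.ofReal r * C :=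
    weighted_enorm_intervalIntegral_volterraConv_sub_le hx hNint.aemeasurable
      hNtint.aemeasurable ENNReal.ofReal_ne_top (setLIntegral_weighted_rpow_two_le hN2 hNr)
      (setLIntegral_weighted_rpow_two_le hNt2 hNtr) hC
  calc ENNReal.ofReal (π - x) * ‖2 * N x - I - (2 * Nt x - It)‖ₑ
      ≤ 2 * (ENNReal.ofReal (π - x) * ‖N x - Nt x‖ₑ) + ENNReal.ofReal (π - x) * ‖I - It‖ₑ := by
        rw [show 2 * N x - I - (2 * Nt x - It) = 2 * (N x - Nt x) - (I - It) by ring]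
        grw [enorm_sub_le, enorm_mul, show ‖(2 : ℂ)‖ₑ = 2 by rw [← ofReal_norm]; norm_num]
        rw [mul_add, mul_left_comm]
    _ ≤ 2 * C + 2 * ENNReal.ofReal √π * ENNReal.ofReal r * C := by grw [hCx, hconv]
    _ = ENNReal.ofReal (2 * (1 + r * √π)) * C := by
        rw [ENNReal.ofReal_mul zero_le_two, ENNReal.ofReal_add zero_le_one (by positivity),
          ENNReal.ofReal_mul hr, ENNReal.ofReal_ofNat, ENNReal.ofReal_one]
        ring

theorem stmt_15 (r : ℝ) (hr : 0 < r) (N Nt M Mt : ℝ → ℂ)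
    (hNint : MeasureTheory.IntegrableOn N (Set.Ioo 0 π))
    (hNtint : MeasureTheory.IntegrableOn Nt (Set.Ioo 0 π))
    (hNr : Real.sqrt (∫ x in Set.Ioo 0 π, ((π - x) * ‖N x‖) ^ 2) ≤ r)
    (hNtr : Real.sqrt (∫ x in Set.Ioo 0 π, ((π - x) * ‖Nt x‖) ^ 2) ≤ r)
    (hN2 : MeasureTheory.Integrable
      (fun x => ((π - x) * ‖N x‖) ^ 2) (volume.restrict (Set.Ioo 0 π)))
    (hNt2 : MeasureTheory.Integrable
      (fun x => ((π - x) * ‖Nt x‖) ^ 2) (volume.restrict (Set.Ioo 0 π)))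
    (hM : ∀ x ∈ Set.Ioo (0 : ℝ) π,
      M x = 2 * N x - ∫ t in (0 : ℝ)..x, ∫ s in (0 : ℝ)..t, N (t - s) * N s)
    (hMt : ∀ x ∈ Set.Ioo (0 : ℝ) π,
      Mt x = 2 * Nt x - ∫ t in (0 : ℝ)..x, ∫ s in (0 : ℝ)..t, Nt (t - s) * Nt s) :
    eLpNorm (fun x => (π - x) * (M x - Mt x)) ⊤ (volume.restrict (Set.Ioo 0 π)) ≤
      ENNReal.ofReal (2 * (1 + r * Real.sqrt π)) *
        eLpNorm (fun x => (π - x) * (N x - Nt x)) ⊤ (volume.restrict (Set.Ioo 0 π)) :=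
  stmt_15_general r N Nt M Mt hNint hNtint hNr hNtr hN2 hNt2 hM hMt
end
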